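/- arXiv:1910.03937 — 6 statements merged into one kernel-verified Lean document; each statement's English description precedes it below -/
import Mathlib

section
/- Let q be a prime number and l an integer with 2 ≤ l ≤ q, and let B = B(q,l). Then Bᵀ B = I_l ⊗ (q·I_q − J_q) + J_{lq}, i.e., the lq×lq matrix Bᵀ B, partitioned into l² blocks of size q×q, has every diagonal block equal to q·I_q and every off-diagonal block equal to J_q. -/
open Matrix Kronecker

/-- The `q × q` cyclic-shift permutation matrix over `ℝ`:
`P i j = 1` iff `j ≡ i - 1 (mod q)`. -/
def cyclicShift (q : ℕ) : Matrix (Fin q) (Fin q) ℝ :=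
  Matrix.of fun i j => if (j : ZMod q) = (i : ZMod q) - 1 then 1 else 0

/-- The `q² × lq` array-code matrix `B(q,l)`, with `q` block-rows and `l` block-columns
of `q × q` blocks, whose `(i,j)` block (`0`-indexed) is `P^(i*j)`. -/
def arrayB (q l : ℕ) : Matrix (Fin q × Fin q) (Fin l × Fin q) ℝ :=
  Matrix.of fun r c => (cyclicShift q ^ ((r.1 : ℕ) * (c.1 : ℕ))) r.2 c.2

lemma fin_cast_inj {q : ℕ} {i j : Fin q} (h : ((i : ℕ) : ZMod q) = ((j : ℕ) : ZMod q)) :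
    i = j := by
  have := congrArg ZMod.val h
  rw [ZMod.val_natCast_of_lt i.isLt, ZMod.val_natCast_of_lt j.isLt] at this
  exact Fin.ext this

lemma sum_fin_eq_sum_zmod {q : ℕ} [NeZero q] (f : ZMod q → ℝ) :
    ∑ a : Fin q, f ((a : ℕ) : ZMod q) = ∑ x : ZMod q, f x := by
  apply Fintype.sum_bijective (fun a : Fin q => ((a : ℕ) : ZMod q)) ?_ _ _ (fun _ => rfl)
  rw [Fintype.bijective_iff_injective_and_card]
  exact ⟨fun a b h => fin_cast_inj h, by simp [ZMod.card]⟩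

lemma cyclicShift_pow (q k : ℕ) :
    cyclicShift q ^ k =
      Matrix.of fun (i j : Fin q) =>
        if ((j : ℕ) : ZMod q) = ((i : ℕ) : ZMod q) - (k : ZMod q) then (1 : ℝ) else 0 := by
  induction k with
  | zero =>
    ext i j
    haveI : NeZero q := ⟨i.pos.ne'⟩
    simp only [pow_zero, Matrix.one_apply, Matrix.of_apply, Nat.cast_zero, sub_zero]
    exact if_congr ⟨fun h => by rw [h], fun h => (fin_cast_inj h).symm⟩ rfl rfl
  | succ k ih =>
    ext i j
    haveI : NeZero q := ⟨i.pos.ne'⟩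
    rw [pow_succ, Matrix.mul_apply]
    simp only [ih, Matrix.of_apply]
    simp only [cyclicShift, Matrix.of_apply]
    rw [sum_fin_eq_sum_zmod (fun x =>
      (if x = ((i : ℕ) : ZMod q) - (k : ZMod q) then (1:ℝ) else 0) *
      (if ((j : ℕ) : ZMod q) = x - 1 then (1:ℝ) else 0))]
    simp only [ite_mul, one_mul, zero_mul]
    rw [Finset.sum_ite_eq' Finset.univ]
    simp only [Finset.mem_univ, if_true]
    refine if_congr ⟨fun h => ?_, fun h => ?_⟩ rfl rfl <;>
      · push_cast at h ⊢; linear_combination h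

theorem arrayB_transpose_mul_self (q l : ℕ) (hq : q.Prime) (hl : 2 ≤ l) (hlq : l ≤ q) :
    (arrayB q l)ᵀ * arrayB q l =
      (1 : Matrix (Fin l) (Fin l) ℝ) ⊗ₖ
          ((q : ℝ) • (1 : Matrix (Fin q) (Fin q) ℝ) - Matrix.of fun _ _ => (1 : ℝ)) +
        Matrix.of fun _ _ => (1 : ℝ) := by
  haveI : Fact q.Prime := ⟨hq⟩
  haveI : NeZero q := ⟨hq.pos.ne'⟩
  ext ⟨j, b⟩ ⟨j', b'⟩
  rw [Matrix.mul_apply]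
  simp only [Matrix.transpose_apply, arrayB, Matrix.of_apply, cyclicShift_pow,
    Fintype.sum_prod_type]
  have hcast : ∀ (i : Fin q) (t : Fin l), (((i : ℕ) * (t : ℕ) : ℕ) : ZMod q)
      = ((i : ℕ) : ZMod q) * ((t : ℕ) : ZMod q) := by push_cast; intros; rfl
  have inner : ∀ i : Fin q,
      (∑ a : Fin q,
        (if ((b : ℕ) : ZMod q) = ((a : ℕ) : ZMod q) - (((i : ℕ) * (j : ℕ) : ℕ) : ZMod q) then (1:ℝ) else 0) *
        (if ((b' : ℕ) : ZMod q) = ((a : ℕ) : ZMod q) - (((i : ℕ) * (j' : ℕ) : ℕ) : ZMod q) then (1:ℝ) else 0)) =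
      if ((b' : ℕ) : ZMod q) - ((b : ℕ) : ZMod q)
          = ((i : ℕ) : ZMod q) * (((j : ℕ) : ZMod q) - ((j' : ℕ) : ZMod q)) then (1:ℝ) else 0 := by
    intro i
    rw [sum_fin_eq_sum_zmod (fun x =>
      (if ((b : ℕ) : ZMod q) = x - (((i : ℕ) * (j : ℕ) : ℕ) : ZMod q) then (1:ℝ) else 0) *
      (if ((b' : ℕ) : ZMod q) = x - (((i : ℕ) * (j' : ℕ) : ℕ) : ZMod q) then (1:ℝ) else 0))]
    simp only [eq_sub_iff_add_eq, ite_mul, one_mul, zero_mul]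
    rw [Finset.sum_ite_eq Finset.univ]
    simp only [Finset.mem_univ, if_true]
    refine if_congr ⟨fun h => ?_, fun h => ?_⟩ rfl rfl <;>
      · rw [hcast i j, hcast i j'] at *; linear_combination h
  simp only [inner]
  rw [sum_fin_eq_sum_zmod (fun x =>
    if ((b' : ℕ) : ZMod q) - ((b : ℕ) : ZMod q)
        = x * (((j : ℕ) : ZMod q) - ((j' : ℕ) : ZMod q)) then (1:ℝ) else 0)]
  simp only [Matrix.add_apply, Matrix.kroneckerMap_apply, Matrix.sub_apply, Matrix.smul_apply,
    Matrix.one_apply, Matrix.of_apply, smul_eq_mul]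
  by_cases hjj : j = j'
  · subst hjj
    simp only [if_pos rfl, sub_self, mul_zero, one_mul]
    rw [Finset.sum_const, Finset.card_univ, ZMod.card]
    have hbb : (((b' : ℕ) : ZMod q) - ((b : ℕ) : ZMod q) = 0) ↔ (b = b') := by
      rw [sub_eq_zero]
      exact ⟨fun h => fin_cast_inj h.symm , fun h => by rw [h]⟩
    rw [if_congr hbb rfl rfl]
    by_cases hb : b = b' <;> simp [hb]
  · have hd : (((j : ℕ) : ZMod q) - ((j' : ℕ) : ZMod q)) ≠ 0 := by
      rw [sub_ne_zero]
      intro h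
      have := congrArg ZMod.val h
      rw [ZMod.val_natCast_of_lt (lt_of_lt_of_le j.isLt hlq),
        ZMod.val_natCast_of_lt (lt_of_lt_of_le j'.isLt hlq)] at this
      exact hjj (Fin.ext this)
    have : ∀ x : ZMod q,
        (((b' : ℕ) : ZMod q) - ((b : ℕ) : ZMod q)
          = x * (((j : ℕ) : ZMod q) - ((j' : ℕ) : ZMod q))) ↔
        (x = (((b' : ℕ) : ZMod q) - ((b : ℕ) : ZMod q)) / (((j : ℕ) : ZMod q) - ((j' : ℕ) : ZMod q))) := by
      intro x
      rw [eq_div_iff hd, eq_comm]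
    simp only [this]
    rw [Finset.sum_ite_eq' Finset.univ]
    simp [hjj]
end

section
/- Let q be a prime number and l an integer with l ≥ q and l ≡ 0 (mod q), and let B = B(q,l). Then the characteristic polynomial of the real q²×q² matrix B Bᵀ equals (X − ql)·(X − l)^{q(q−1)}·X^{q−1}. Equivalently, B has a simple singular value √(ql), q(q−1) singular values equal to √l, and q−1 singular values equal to 0. -/
open Matrix Polynomial

/-!
Each entry of `B Bᵀ` counts the `j < l` with `(i - i') j ≡ a - b (mod q)`; since `q` is prime
and `q ∣ l`, this is `l [a = b]` on diagonal blocks and `l / q` off them, so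
`B Bᵀ = l • 1 + (l / q) • ((J - 1) ⊗ J)` with `J` the all-ones `q × q` matrix. The matrix `J`
has eigenvalues `q` (eigenvector the all-ones vector) and `0` (eigenvectors `e b - e 0`), and
conjugating by the Kronecker square of this eigenbasis diagonalises `B Bᵀ`, with eigenvalue
`l + (l / q) (μ - 1) ν` at the pair `(μ, ν)` of eigenvalues of `J`.
-/

open Finset Kronecker

section ZModSums

variable {M : Type*} [AddCommMonoid M] {q : ℕ} [NeZero q]

lemma Fin.natCast_zmod_bijective : Function.Bijective fun c : Fin q => ((c : ℕ) : ZMod q) := by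
  refine (Fintype.bijective_iff_injective_and_card _).2 ⟨fun a b h => ?_, by simp⟩
  simpa [ZMod.natCast_eq_natCast_iff', Nat.mod_eq_of_lt, Fin.val_inj] using h

lemma Fin.natCast_zmod_inj {a b : Fin q} : ((a : ℕ) : ZMod q) = b ↔ a = b :=
  Fin.natCast_zmod_bijective.injective.eq_iff

lemma Fin.sum_natCast_zmod (f : ZMod q → M) : ∑ c : Fin q, f (c : ℕ) = ∑ x, f x :=
  Fintype.sum_bijective _ Fin.natCast_zmod_bijective _ _ fun _ => rfl

lemma Fin.sum_mul_natCast_zmod (m : ℕ) (f : ZMod q → M) :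
    ∑ j : Fin (q * m), f (j : ℕ) = m • ∑ x, f x := by
  induction m with
  | zero => simp
  | succ m ih =>
    rw [Fin.sum_univ_eq_sum_range (fun j => f j), mul_add_one, sum_range_add,
      ← Fin.sum_univ_eq_sum_range (fun j => f j), ih, ← Fin.sum_univ_eq_sum_range
      (fun j => f ((q * m + j : ℕ) : ZMod q)), succ_nsmul]
    simp [Fin.sum_natCast_zmod]

end ZModSums

lemma sum_ite_mul_eq {F R : Type*} [Field F] [Fintype F] [DecidableEq F]
    [AddCommMonoidWithOne R] (d s : F) :
    ∑ x : F, (if d * x = s then (1 : R) else 0) =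
      if d = 0 then (if s = 0 then (Fintype.card F : R) else 0) else 1 := by
  rcases eq_or_ne d 0 with rfl | hd
  · by_cases hs : s = 0 <;> simp [hs, eq_comm]
  · simp [hd, ← eq_inv_mul_iff_mul_eq₀ hd]

lemma cyclicShift_pow_apply {q : ℕ} [NeZero q] (k : ℕ) (a c : Fin q) :
    (cyclicShift q ^ k) a c = if (c : ZMod q) = a - k then 1 else 0 := by
  induction k generalizing c with
  | zero => simp [one_apply, Fin.natCast_zmod_inj, eq_comm]
  | succ k ih =>
    rw [pow_succ, mul_apply]
    simp only [ih]
    simp only [cyclicShift, of_apply, ite_mul, one_mul, zero_mul]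
    rw [Fin.sum_natCast_zmod (fun z => if z = (a : ZMod q) - ((k : ℕ) : ZMod q) then
      (if (c : ZMod q) = z - 1 then (1 : ℝ) else 0) else 0)]
    simp [sub_sub]

lemma arrayB_mul_transpose_apply {q : ℕ} [Fact q.Prime] (m : ℕ) (i a i' b : Fin q) :
    (arrayB q (q * m) * (arrayB q (q * m))ᵀ) (i, a) (i', b) =
      m * (if i = i' then (if a = b then (q : ℝ) else 0) else 1) := by
  have hterm : ∀ j : Fin (q * m), ∑ c : Fin q, arrayB q (q * m) (i, a) (j, c) *
      arrayB q (q * m) (i', b) (j, c) =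
        if ((i : ZMod q) - i') * ((j : ℕ) : ZMod q) = (a : ZMod q) - b then 1 else 0 := by
    intro j
    simp only [arrayB, of_apply, cyclicShift_pow_apply, Nat.cast_mul, ite_mul, one_mul, zero_mul]
    rw [Fin.sum_natCast_zmod fun z =>
      if z = (a : ZMod q) - ((i : ℕ) : ZMod q) * ((j : ℕ) : ZMod q) then
        (if z = (b : ZMod q) - ((i' : ℕ) : ZMod q) * ((j : ℕ) : ZMod q) then (1 : ℝ) else 0)
      else 0]
    simp only [sum_ite_eq', mem_univ, if_true]
    congr 1
    apply propext
    constructor <;> intro h <;> linear_combination -h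
  rw [mul_apply, Fintype.sum_prod_type]
  simp only [transpose_apply, hterm]
  rw [Fin.sum_mul_natCast_zmod m fun z =>
      if (((i : ℕ) : ZMod q) - ((i' : ℕ) : ZMod q)) * z = ((a : ℕ) : ZMod q) - ((b : ℕ) : ZMod q)
      then (1 : ℝ) else 0,
    sum_ite_mul_eq, ZMod.card, nsmul_eq_mul]
  simp only [sub_eq_zero, Fin.natCast_zmod_inj]

section OnesEigenbasis

variable {ι K : Type*} [Fintype ι] [DecidableEq ι] [Field K]

def onesEigenbasis (i₀ : ι) : Matrix ι ι K :=
  of fun a b => if b = i₀ then 1 else (if a = b then 1 else 0) - (if a = i₀ then 1 else 0)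

-- Row `b` reads off the coefficient of column `b` of `onesEigenbasis i₀` in a vector.
def onesEigenbasisInv (i₀ : ι) : Matrix ι ι K :=
  of fun b a => (if b = i₀ then 0 else if a = b then 1 else 0) +
    (if b = i₀ then 1 else -1) / Fintype.card ι

lemma onesEigenbasisInv_mul_onesEigenbasis (i₀ : ι) (h : (Fintype.card ι : K) ≠ 0) :
    onesEigenbasisInv i₀ * onesEigenbasis i₀ = (1 : Matrix ι ι K) := by
  ext b c
  simp only [onesEigenbasisInv, onesEigenbasis, mul_apply, of_apply, add_mul, sum_add_distrib]
  by_cases hc : c = i₀ <;> by_cases hb : b = i₀ <;>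
    simp [hc, hb, one_apply, mul_sub, sum_sub_distrib, h, mul_div_cancel₀, eq_comm, Ne.symm]

lemma ones_mul_onesEigenbasis (i₀ : ι) :
    (of fun _ _ => 1 : Matrix ι ι K) * onesEigenbasis i₀ =
      onesEigenbasis i₀ * diagonal (Pi.single i₀ (Fintype.card ι : K)) := by
  ext a b
  rw [mul_diagonal, mul_apply]
  by_cases hb : b = i₀ <;> simp [onesEigenbasis, hb, sum_sub_distrib]

lemma ones_eq_onesEigenbasis_mul_diagonal_mul (i₀ : ι) (h : (Fintype.card ι : K) ≠ 0) :
    (of fun _ _ => 1 : Matrix ι ι K) =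
      onesEigenbasis i₀ * diagonal (Pi.single i₀ (Fintype.card ι : K)) * onesEigenbasisInv i₀ := by
  have hinv : onesEigenbasis i₀ * onesEigenbasisInv i₀ = (1 : Matrix ι ι K) :=
    mul_eq_one_comm.mp (onesEigenbasisInv_mul_onesEigenbasis i₀ h)
  rw [← ones_mul_onesEigenbasis, mul_assoc, hinv, mul_one]

end OnesEigenbasis

section Charpoly

variable {ι R : Type*} [Fintype ι] [DecidableEq ι] [CommRing R]

lemma charpoly_conj_of_mul_eq_one {V W : Matrix ι ι R} (hWV : W * V = 1) (D : Matrix ι ι R) :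
    (V * D * W).charpoly = D.charpoly := by
  rw [mul_assoc, charpoly_mul_comm, mul_assoc, hWV, mul_one]

lemma charpoly_smul_one_add_smul_sub_one_kronecker {V W : Matrix ι ι R} (hWV : W * V = 1)
    (d : ι → R) (c m : R) :
    (c • 1 + m • ((V * diagonal d * W - 1) ⊗ₖ (V * diagonal d * W))).charpoly =
      ∏ p : ι × ι, (X - C (c + m * (d p.1 - 1) * d p.2)) := by
  have hVW : V * W = 1 := mul_eq_one_comm.mp hWV
  have hconj : c • 1 + m • ((V * diagonal d * W - 1) ⊗ₖ (V * diagonal d * W)) =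
      (V ⊗ₖ V) * diagonal (fun p => c + m * (d p.1 - 1) * d p.2) * (W ⊗ₖ W) := by
    have hsub : V * diagonal d * W - 1 = V * diagonal (d - 1) * W := by
      have : diagonal (d - 1) = diagonal d - 1 := by
        rw [← diagonal_one, diagonal_sub]
        rfl
      rw [this, mul_sub, sub_mul, mul_one, hVW]
    have hdiag : diagonal (fun p : ι × ι => c + m * (d p.1 - 1) * d p.2) =
        c • 1 + m • (diagonal (d - 1) ⊗ₖ diagonal d) := by
      rw [diagonal_kronecker_diagonal]
      ext p p'
      by_cases hp : p = p' <;> simp [hp, mul_assoc]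
    rw [hdiag, hsub, mul_kronecker_mul, mul_kronecker_mul, mul_add, add_mul, mul_smul_comm,
      smul_mul_assoc, mul_smul_comm, smul_mul_assoc, mul_one, ← mul_kronecker_mul V W, hVW,
      one_kronecker_one]
  rw [hconj, charpoly_conj_of_mul_eq_one (by rw [← mul_kronecker_mul, hWV, one_kronecker_one]),
    charpoly_diagonal]

end Charpoly

lemma Fintype.prod_eq_mul_pow_of_forall_ne {ι M : Type*} [Fintype ι] [DecidableEq ι]
    [CommMonoid M] {f : ι → M} (a : ι) {b : M} (h : ∀ i ≠ a, f i = b) :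
    ∏ i, f i = f a * b ^ (Fintype.card ι - 1) := by
  rw [Fintype.prod_eq_mul_prod_compl a,
    Finset.prod_congr rfl fun i hi => h i (by simpa using hi), prod_const, card_compl,
    card_singleton]

lemma arrayB_mul_transpose_eq {q : ℕ} [Fact q.Prime] (m : ℕ) :
    arrayB q (q * m) * (arrayB q (q * m))ᵀ =
      ((q * m : ℕ) : ℝ) • 1 + (m : ℝ) • ((of fun _ _ => 1 : Matrix (Fin q) (Fin q) ℝ) - 1) ⊗ₖ
        (of fun _ _ => 1 : Matrix (Fin q) (Fin q) ℝ) := by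
  ext ⟨i, a⟩ ⟨i', b⟩
  rw [arrayB_mul_transpose_apply]
  by_cases hi : i = i' <;> by_cases ha : a = b <;> simp [hi, ha, one_apply, mul_comm]

theorem arrayB_charpoly_of_dvd_general (q l : ℕ) (hq : q.Prime) (hdvd : l % q = 0) :
    (arrayB q l * (arrayB q l)ᵀ).charpoly =
      (X - C ((q : ℝ) * l)) * (X - C (l : ℝ)) ^ (q * (q - 1)) * X ^ (q - 1) := by
  have := Fact.mk hq
  obtain ⟨m, rfl⟩ := Nat.dvd_of_mod_eq_zero hdvd
  have hq0 : (Fintype.card (Fin q) : ℝ) ≠ 0 := by simpa using hq.ne_zero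
  rw [arrayB_mul_transpose_eq, ones_eq_onesEigenbasis_mul_diagonal_mul 0 hq0,
    charpoly_smul_one_add_smul_sub_one_kronecker (onesEigenbasisInv_mul_onesEigenbasis 0 hq0),
    Fintype.prod_prod_type]
  rw [prod_congr rfl fun i _ => Fintype.prod_eq_mul_pow_of_forall_ne 0
      (b := X - C ((q * m : ℕ) : ℝ)) fun a ha => by simp [ha],
    prod_mul_distrib, prod_const,
    Fintype.prod_eq_mul_pow_of_forall_ne 0 (b := X) fun i hi => by simp [hi, mul_comm]]
  simp only [Pi.single_eq_same, Fintype.card_fin, card_univ, ← pow_mul]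
  push_cast
  ring_nf

theorem arrayB_charpoly_of_dvd (q l : ℕ) (hq : q.Prime) (hql : q ≤ l) (hdvd : l % q = 0) :
    (arrayB q l * (arrayB q l)ᵀ).charpoly =
      (X - C ((q : ℝ) * l)) * (X - C (l : ℝ)) ^ (q * (q - 1)) * X ^ (q - 1) :=
  arrayB_charpoly_of_dvd_general q l hq hdvd
end

section
/- Let q be a prime and l ≥ 2 an integer, and set ν(m,q) = (q^m − 1)/(q − 1). Let N be the real incidence matrix whose rows are indexed by the one-dimensional subspaces S of (ZMod q)^l, whose columns are indexed by the (l−1)-dimensional subspaces T of (ZMod q)^l, with N_{S,T} = 1 if S ≤ T and 0 otherwise. Then N Nᵀ = q^{l−2}·I + ν(l−2,q)·J, where I is the identity and J the all-ones matrix on the ν(l,q) one-dimensional subspaces. Consequently every eigenvalue of N Nᵀ other than ν(l−1,q)² (which is simple) equals q^{l−2}, i.e., every singular value of N other than the largest one ν(l−1,q) equals √(q^{l−2}). -/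
open Module Submodule

section Counting

variable {K V : Type*} [Field K] [Finite K] [AddCommGroup V] [Module K V]
  [FiniteDimensional K V]

lemma geom_count {c n a : ℕ} (hc : 2 ≤ c) (h : a * (c - 1) = c ^ n - 1) :
    a = ∑ i ∈ Finset.range n, c ^ i := by
  have h1 : 1 ≤ c := by omega
  have hpow : 1 ≤ c ^ n := Nat.one_le_pow _ _ (by omega)
  have h' := congrArg (Nat.cast : ℕ → ℤ) h
  push_cast [h1, hpow] at h'
  have g := geom_sum_mul (c : ℤ) n
  have key : (a : ℤ) = ∑ i ∈ Finset.range n, (c : ℤ) ^ i :=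
    mul_right_cancel₀ (by have h2 : (2:ℤ) ≤ (c : ℤ) := by exact_mod_cast hc
                          omega)
      (h'.trans g.symm)
  exact_mod_cast key

lemma finiteV (K V : Type*) [Field K] [Finite K] [AddCommGroup V] [Module K V]
    [FiniteDimensional K V] : Finite V := by
  have b := Module.finBasis K V
  exact Finite.of_equiv _ b.equivFun.toEquiv.symm

lemma card_ne {α : Type*} [Fintype α] [DecidableEq α] (a : α) :
    Fintype.card {x : α // x ≠ a} = Fintype.card α - 1 := by
  simp [ne_eq, Fintype.card_subtype_compl, Fintype.card_subtype_eq]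

lemma card_lines :
    Nat.card {S : Submodule K V // finrank K S = 1}
      = ∑ i ∈ Finset.range (finrank K V), Nat.card K ^ i := by
  classical
  have : Finite V := finiteV K V
  have := Fintype.ofFinite V
  have := Fintype.ofFinite K
  have hc : 2 ≤ Nat.card K := Nat.card_eq_fintype_card (α := K) ▸ Fintype.one_lt_card
  -- the fiber map
  have hfin : Finite (Submodule K V) :=
    Finite.of_injective _ (SetLike.coe_injective (A := Submodule K V))
  let f : {v : V // v ≠ 0} → {S : Submodule K V // finrank K S = 1} :=
    fun v => ⟨K ∙ v.1, finrank_span_singleton v.2⟩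
  have hfiber : ∀ S : {S : Submodule K V // finrank K S = 1},
      Nat.card {v : {v : V // v ≠ 0} // f v = S} = Nat.card K - 1 := by
    intro S
    have e1 : {v : {v : V // v ≠ 0} // f v = S} ≃ {x : S.1 // x ≠ 0} := by
      refine ⟨fun v => ⟨⟨v.1.1, ?_⟩, ?_⟩, fun x => ⟨⟨x.1.1, fun h => x.2 (Subtype.ext h)⟩, ?_⟩,
        fun v => rfl, fun x => rfl⟩
      · have : (K ∙ v.1.1) = S.1 := congrArg Subtype.val v.2
        exact this ▸ Submodule.mem_span_singleton_self _
      · exact fun h => v.1.2 (by simpa using congrArg Subtype.val h)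
      · apply Subtype.ext
        dsimp [f]
        exact Submodule.eq_of_le_of_finrank_eq
          ((Submodule.span_singleton_le_iff_mem _ _).2 x.1.2)
          (by rw [finrank_span_singleton (fun h => x.2 (Subtype.ext h)), S.2])
    rw [Nat.card_congr e1]
    have : Nat.card S.1 = Nat.card K ^ 1 := by
      have := Fintype.ofFinite S.1
      rw [Nat.card_eq_fintype_card, Nat.card_eq_fintype_card,
        card_eq_pow_finrank (K := K) (V := S.1), S.2]
    simp only [Nat.card_eq_fintype_card] at this ⊢
    rw [card_ne, this, pow_one]
  -- total count
  have := Fintype.ofFinite {S : Submodule K V // finrank K S = 1}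
  have htot : Nat.card {v : V // v ≠ 0}
      = Nat.card {S : Submodule K V // finrank K S = 1} * (Nat.card K - 1) := by
    rw [Nat.card_congr (Equiv.sigmaFiberEquiv f).symm]
    simp only [Nat.card_eq_fintype_card, Fintype.card_sigma]
    rw [Finset.sum_congr rfl (fun S _ => ?_), Finset.sum_const, Finset.card_univ, smul_eq_mul]
    rw [← Nat.card_eq_fintype_card, hfiber S, Nat.card_eq_fintype_card]
  have hV : Nat.card {v : V // v ≠ 0} = Nat.card K ^ finrank K V - 1 := by
    simp only [Nat.card_eq_fintype_card]
    rw [card_ne, card_eq_pow_finrank (K := K) (V := V)]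
  exact geom_count hc (by rw [← htot, hV])

lemma finrank_dualAnnihilator' (W : Subspace K V) :
    finrank K W.dualAnnihilator = finrank K V - finrank K W := by
  have h : finrank K (V ⧸ W) = finrank K W.dualAnnihilator :=
    LinearEquiv.finrank_eq (Subspace.quotEquivAnnihilator W)
  have h2 := Submodule.finrank_quotient_add_finrank W
  omega

lemma card_hyperplanes (h1 : 1 ≤ finrank K V) :
    Nat.card {T : Submodule K V // finrank K T = finrank K V - 1}
      = ∑ i ∈ Finset.range (finrank K V), Nat.card K ^ i := by
  have hd : finrank K (Module.Dual K V) = finrank K V := Subspace.dual_finrank_eq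
  have e : {T : Submodule K V // finrank K T = finrank K V - 1}
      ≃ {U : Submodule K (Module.Dual K V) // finrank K U = 1} := by
    refine ⟨fun T => ⟨T.1.dualAnnihilator, ?_⟩,
           fun U => ⟨U.1.dualCoannihilator, ?_⟩,
           fun T => Subtype.ext Subspace.dualAnnihilator_dualCoannihilator_eq,
           fun U => Subtype.ext Subspace.dualCoannihilator_dualAnnihilator_eq⟩
    · rw [finrank_dualAnnihilator', T.2]; omega
    · rw [Subspace.finrank_dualCoannihilator_eq, finrank_dualAnnihilator', hd, U.2]
  rw [Nat.card_congr e, card_lines, hd]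

lemma card_hyperplanes_above (W : Submodule K V) (hW : finrank K W < finrank K V) :
    Nat.card {T : Submodule K V // finrank K T = finrank K V - 1 ∧ W ≤ T}
      = ∑ i ∈ Finset.range (finrank K V - finrank K W), Nat.card K ^ i := by
  have hq : finrank K (V ⧸ W) = finrank K V - finrank K W := by
    have := Submodule.finrank_quotient_add_finrank W; omega
  have hWle : ∀ T' : Submodule K (V ⧸ W), W ≤ comap W.mkQ T' := fun T' x hx => by
    have : W.mkQ x = 0 := (Submodule.Quotient.mk_eq_zero W).2 hx
    simp [Submodule.mem_comap, this]
  have key : ∀ T' : Submodule K (V ⧸ W),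
      finrank K (comap W.mkQ T') = finrank K T' + finrank K W := by
    intro T'
    have hr := LinearMap.finrank_range_add_finrank_ker
      (W.mkQ.comp (comap W.mkQ T').subtype)
    have hrange : LinearMap.range (W.mkQ.comp (comap W.mkQ T').subtype) = T' := by
      rw [LinearMap.range_comp, Submodule.range_subtype,
        Submodule.map_comap_eq_of_surjective (Submodule.mkQ_surjective W)]
    have hker : LinearMap.ker (W.mkQ.comp (comap W.mkQ T').subtype)
        = comap (comap W.mkQ T').subtype W := by
      rw [LinearMap.ker_comp, Submodule.ker_mkQ]
    rw [hrange, hker] at hr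
    rw [← hr, (Submodule.comapSubtypeEquivOfLe (hWle T')).finrank_eq]
  have e : {T' : Submodule K (V ⧸ W) // finrank K T' = finrank K (V ⧸ W) - 1}
      ≃ {T : Submodule K V // finrank K T = finrank K V - 1 ∧ W ≤ T} := by
    refine ⟨fun T' => ⟨comap W.mkQ T'.1, ?_, hWle T'.1⟩,
           fun T => ⟨map W.mkQ T.1, ?_⟩, fun T' => ?_, fun T => ?_⟩
    · rw [key, T'.2]; omega
    · have hc : comap W.mkQ (map W.mkQ T.1) = T.1 := by
        rw [Submodule.comap_map_eq, Submodule.ker_mkQ, sup_eq_left.2 T.2.2]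
      have := key (map W.mkQ T.1)
      rw [hc, T.2.1] at this
      omega
    · apply Subtype.ext
      exact Submodule.map_comap_eq_of_surjective (Submodule.mkQ_surjective W) _
    · apply Subtype.ext
      dsimp only
      rw [Submodule.comap_map_eq, Submodule.ker_mkQ, sup_eq_left.2 T.2.2]
  rw [← hq, ← card_hyperplanes (by omega)]
  exact (Nat.card_congr e).symm

end Counting



open Matrix

/-- For Gunnells' incidence matrix `N` between one-dimensional subspaces `S` and
`(l-1)`-dimensional subspaces `T` of `(ZMod q)^l` (with `N S T = 1` iff `S ≤ T`),
we have `N Nᵀ = q^(l-2) • I + ν(l-2,q) • J` where `ν(m,q) = ∑_{i<m} q^i`; hence all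
singular values of `N` other than the largest `ν(l-1,q)` equal `√(q^(l-2))`. -/
theorem gunnells_incidence_gram (q l : ℕ) (hq : q.Prime) (hl : 2 ≤ l)
    [Fintype {T : Submodule (ZMod q) (Fin l → ZMod q) // Module.finrank (ZMod q) T = l - 1}]
    [Fintype {S : Submodule (ZMod q) (Fin l → ZMod q) // Module.finrank (ZMod q) S = 1}]
    [DecidableEq {S : Submodule (ZMod q) (Fin l → ZMod q) // Module.finrank (ZMod q) S = 1}]
    [∀ S T : Submodule (ZMod q) (Fin l → ZMod q), Decidable (S ≤ T)]
    (N : Matrix {S : Submodule (ZMod q) (Fin l → ZMod q) // Module.finrank (ZMod q) S = 1}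
        {T : Submodule (ZMod q) (Fin l → ZMod q) // Module.finrank (ZMod q) T = l - 1} ℝ)
    (hN : ∀ S T, N S T = if S.1 ≤ T.1 then 1 else 0) :
    N * Nᵀ =
      ((q : ℝ) ^ (l - 2)) • 1 +
        (∑ i ∈ Finset.range (l - 2), (q : ℝ) ^ i) • Matrix.of fun _ _ => (1 : ℝ) := by
  haveI := Fact.mk hq
  haveI : NeZero q := ⟨hq.ne_zero⟩
  have hV : finrank (ZMod q) (Fin l → ZMod q) = l := Module.finrank_fin_fun (ZMod q)
  have hcard : Nat.card (ZMod q) = q := Nat.card_zmod q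
  ext S S'
  rw [Matrix.mul_apply]
  simp only [Matrix.transpose_apply, hN, Matrix.add_apply, Matrix.smul_apply,
    Matrix.one_apply, Matrix.of_apply, smul_eq_mul, mul_one]
  have hterm : ∀ T : {T : Submodule (ZMod q) (Fin l → ZMod q) //
        Module.finrank (ZMod q) T = l - 1}, (if S.1 ≤ T.1 then (1:ℝ) else 0) * (if S'.1 ≤ T.1 then 1 else 0)
      = if S.1 ⊔ S'.1 ≤ T.1 then 1 else 0 := by
    intro T; by_cases h1 : S.1 ≤ T.1 <;> by_cases h2 : S'.1 ≤ T.1 <;>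
      simp [h1, h2, sup_le_iff]
  rw [Finset.sum_congr rfl fun T _ => hterm T, Finset.sum_boole]
  have hcount : (Finset.univ.filter fun T :
        {T : Submodule (ZMod q) (Fin l → ZMod q) // Module.finrank (ZMod q) T = l - 1} =>
        S.1 ⊔ S'.1 ≤ T.1).card
      = Nat.card {T : Submodule (ZMod q) (Fin l → ZMod q) //
          finrank (ZMod q) T = l - 1 ∧ S.1 ⊔ S'.1 ≤ T} := by
    rw [← Fintype.card_subtype, ← Nat.card_eq_fintype_card]
    exact Nat.card_congr (Equiv.subtypeSubtypeEquivSubtypeInter _ _)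
  rw [hcount]
  by_cases hSS' : S = S'
  · subst hSS'
    have h1 : finrank (ZMod q) (S.1 ⊔ S.1 : Submodule (ZMod q) (Fin l → ZMod q)) = 1 := by
      rw [sup_idem]; exact S.2
    have hc := card_hyperplanes_above (K := ZMod q) (S.1 ⊔ S.1) (by rw [h1, hV]; omega)
    rw [hV, h1, hcard] at hc
    rw [hc]
    rw [show l - 1 = (l - 2) + 1 by omega, Finset.sum_range_succ]
    simp only [if_pos rfl, mul_one]
    push_cast
    ring
  · have hne : S.1 ≠ S'.1 := fun h => hSS' (Subtype.ext h)
    have hlt : S.1 ⊓ S'.1 < S.1 := lt_of_le_of_ne inf_le_left (fun h => hne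
      (Submodule.eq_of_le_of_finrank_eq (inf_eq_left.1 h) (S.2.trans S'.2.symm)))
    have hinf : finrank (ZMod q) (S.1 ⊓ S'.1 : Submodule (ZMod q) (Fin l → ZMod q)) = 0 := by
      have := Submodule.finrank_lt_finrank_of_lt hlt
      rw [S.2] at this; omega
    have hsup : finrank (ZMod q) (S.1 ⊔ S'.1 : Submodule (ZMod q) (Fin l → ZMod q)) = 2 := by
      have := Submodule.finrank_sup_add_finrank_inf_eq S.1 S'.1
      rw [S.2, S'.2, hinf] at this; omega
    rw [if_neg hSS', mul_zero, zero_add]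
    by_cases hl2 : 2 < l
    · have hc := card_hyperplanes_above (K := ZMod q) (S.1 ⊔ S'.1) (by rw [hsup, hV]; omega)
      rw [hV, hsup, hcard] at hc
      rw [hc]
      push_cast
      ring
    · have hl2' : l = 2 := by omega
      have htop : S.1 ⊔ S'.1 = ⊤ := Submodule.eq_top_of_finrank_eq (by rw [hsup, hV, hl2'])
      have : IsEmpty {T : Submodule (ZMod q) (Fin l → ZMod q) //
          finrank (ZMod q) T = l - 1 ∧ S.1 ⊔ S'.1 ≤ T} := by
        refine ⟨fun T => ?_⟩
        have hT := T.2.1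
        have heq : T.1 = ⊤ := top_le_iff.1 (htop ▸ T.2.2)
        rw [heq] at hT
        rw [finrank_top, hV] at hT
        omega
      rw [Nat.card_of_isEmpty]
      simp [hl2']
end

section
/- Let B be a real n×n matrix and Π an n×n permutation matrix such that A := B·Π is symmetric. Then A² = A·Aᵀ = B·Bᵀ; consequently, for every real eigenvalue λ of A, λ² is an eigenvalue of B·Bᵀ, so the absolute values of the eigenvalues of A are singular values of B. In particular, if B is the biadjacency matrix of a bipartite Ramanujan graph and BΠ is symmetric, then BΠ is the adjacency matrix of a (non-bipartite) Ramanujan graph. -/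
open Matrix

/-- If `Pm` is a permutation matrix and `A = B * Pm` is symmetric, then
`A * Aᵀ = A² = B * Bᵀ`; consequently for every real eigenvalue `μ` of `A`, `μ²` is an
eigenvalue of `B * Bᵀ`, i.e. `|μ|` is a singular value of `B`.  In particular, if `B`
is the biadjacency matrix of a bipartite Ramanujan graph and `B * Pm` is symmetric,
then `B * Pm` is the adjacency matrix of a non-bipartite Ramanujan graph. -/
theorem symm_perm_mul_eigenvalues (n : ℕ) (B Pm A : Matrix (Fin n) (Fin n) ℝ)
    (σ : Equiv.Perm (Fin n)) (hPm : ∀ i j, Pm i j = if j = σ i then 1 else 0)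
    (hA : A = B * Pm) (hsymm : A.IsSymm) :
    A * Aᵀ = B * Bᵀ ∧ A ^ 2 = B * Bᵀ ∧
      ∀ μ : ℝ, Module.End.HasEigenvalue (Matrix.toLin' A) μ →
        Module.End.HasEigenvalue (Matrix.toLin' (B * Bᵀ)) (μ ^ 2) := by
  have hPP : Pm * Pmᵀ = 1 := by
    ext i j
    simp only [Matrix.mul_apply, Matrix.transpose_apply, hPm, Matrix.one_apply]
    rcases eq_or_ne i j with rfl | h
    · simp
    · rw [Finset.sum_eq_zero, if_neg h]
      intro k _
      rcases eq_or_ne k (σ i) with rfl | hk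
      · rw [if_pos rfl, if_neg (fun hh => h (σ.injective hh)), mul_zero]
      · rw [if_neg hk, zero_mul]
  have h1 : A * Aᵀ = B * Bᵀ := by
    rw [hA, Matrix.transpose_mul, Matrix.mul_assoc, ← Matrix.mul_assoc Pm, hPP,
      Matrix.one_mul]
  have h2 : A ^ 2 = B * Bᵀ := by
    rw [pow_two]
    nth_rewrite 2 [← hsymm]
    exact h1
  refine ⟨h1, h2, fun μ hμ => ?_⟩
  obtain ⟨v, hv⟩ := hμ.exists_hasEigenvector
  refine Module.End.hasEigenvalue_of_hasEigenvector (x := v) ⟨?_, hv.2⟩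
  have := hv.1
  rw [Module.End.mem_eigenspace_iff] at this
  rw [Module.End.mem_eigenspace_iff]
  have hsq : Matrix.toLin' (B * Bᵀ) = Matrix.toLin' A ∘ₗ Matrix.toLin' A := by
    rw [← h2, pow_two, Matrix.toLin'_mul]
  rw [hsq]
  simp [this, smul_smul, pow_two]
end

section
/- Let E ∈ {0,1}^{n_r×n_c} be the biadjacency matrix of a (d_r,d_c)-biregular bipartite graph (every row of E sums to d_r and every column sums to d_c), and let M ⊆ [n_r]×[n_c] be a set of prohibited edges such that for each i the set {j : (i,j) ∈ M} has at most p elements and for each j the set {i : (i,j) ∈ M} has at most p elements. Let θ_c be the maximum inner product between two distinct columns of E. If 2p ≤ n_c − d_r and 2p − 1 ≤ d_c − θ_c, then there exists a matrix E_p ∈ {0,1}^{n_r×n_c} such that every row of E_p sums to d_r, every column of E_p sums to d_c, and E_p(i,j) = 0 for every (i,j) ∈ M. -/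
/-!
A 0-1 matrix with row sums `dr`, column sums `dc` and zeros on `M` exists as soon as
`nr dr = nc dc` and every cut satisfies `dr |A| ≤ dc |B| + #(allowed cells of A × Bᶜ)`: this is
Hall's theorem for a graph in which each row has `dr` slots, each column `dc` slots, and each
cell sits between them (a perfect matching routes a row slot through a cell into a column slot).

Averaging the inner products of one column of `E` with all the others gives
`dc (dr - 1) ≤ (nc - 1) θc`, hence `(2p - 1)(nc - 1) ≤ dc (nc - dr)`. Since `A × Bᶜ` contains at
most `p min(|A|, |Bᶜ|)` prohibited cells, the cut condition then follows by comparing `|A|` with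
`dc` and `|Bᶜ|` with `dr` and `dr + p`.
-/

open Finset

lemma card_filter_apply_mem_of_injective {γ δ : Type*} [Fintype γ] [DecidableEq δ] {g : γ → δ}
    (hg : Function.Injective g) {T : Finset δ} (hT : ∀ y ∈ T, ∃ x, g x = y) :
    #{x | g x ∈ T} = #T :=
  card_nbij g (fun x hx => (mem_filter.1 hx).2) hg.injOn fun y hy => by
    obtain ⟨x, rfl⟩ := hT y hy
    exact ⟨x, by simpa using hy, rfl⟩

lemma card_filter_apply_mem_le_mul_card {γ ι : Type*} [DecidableEq ι] {M : Finset γ} {f : γ → ι}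
    {p : ℕ} (hM : ∀ i, #{e ∈ M | f e = i} ≤ p) (A : Finset ι) :
    #{e ∈ M | f e ∈ A} ≤ p * #A :=
  card_le_mul_card_image_of_maps_to (fun _ he => (mem_filter.1 he).2) p fun i _ =>
    (card_le_card fun _ he => by simp_all).trans (hM i)

section SlotGadget

variable {α β : Type*} [Fintype α] [Fintype β] [DecidableEq α] [DecidableEq β]

/-- Row slots `(i, s)` and cells `(i, j)` on the left, column slots `(j, s)` and cells on the right.
A row slot may take any allowed cell of its row; a cell is matched either to its own copy
(unused) or, when allowed, to a slot of its column (used). -/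
def SlotAdj (M : Finset (α × β)) (dr dc : ℕ) :
    (α × Fin dr) ⊕ (α × β) → (β × Fin dc) ⊕ (α × β) → Prop
  | .inl _, .inl _ => False
  | .inl (i, _), .inr (i', j) => i' = i ∧ (i', j) ∉ M
  | .inr c, .inl (j, _) => c.2 = j ∧ c ∉ M
  | .inr c, .inr c' => c' = c

def CutCondition (M : Finset (α × β)) (dr dc : ℕ) : Prop :=
  ∀ (A : Finset α) (B : Finset β), dr * #A ≤ dc * #B + #{c ∈ A ×ˢ Bᶜ | c ∉ M}

variable {M : Finset (α × β)} {dr dc : ℕ}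

instance : DecidableRel (SlotAdj M dr dc)
  | .inl _, .inl _ => inferInstanceAs (Decidable False)
  | .inl (i, _), .inr (i', j) => inferInstanceAs (Decidable (i' = i ∧ (i', j) ∉ M))
  | .inr c, .inl (j, _) => inferInstanceAs (Decidable (c.2 = j ∧ c ∉ M))
  | .inr c, .inr c' => inferInstanceAs (Decidable (c' = c))

lemma card_le_card_slotAdj_image (hcut : CutCondition M dr dc)
    (S : Finset ((α × Fin dr) ⊕ (α × β))) :
    #S ≤ #{y | ∃ x ∈ S, SlotAdj M dr dc x y} := by
  set A := S.toLeft.image Prod.fst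
  set B := ({c ∈ S.toRight | c ∉ M}).image Prod.snd
  have hsub : (B ×ˢ (univ : Finset (Fin dc))).disjSum ({c ∈ A ×ˢ Bᶜ | c ∉ M} ∪ S.toRight) ⊆
      ({y | ∃ x ∈ S, SlotAdj M dr dc x y} : Finset _) := by
    intro y hy
    simp only [mem_filter, mem_univ, true_and]
    rcases y with ⟨j, s⟩ | c
    · obtain ⟨c, ⟨hcS, hcM⟩, rfl⟩ : ∃ c, (Sum.inr c ∈ S ∧ c ∉ M) ∧ c.2 = j := by
        simpa [B] using hy
      exact ⟨.inr c, hcS, rfl, hcM⟩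
    · simp only [inr_mem_disjSum, mem_union, mem_filter, mem_product, mem_toRight] at hy
      rcases hy with ⟨⟨hcA, -⟩, hcM⟩ | hcS
      · obtain ⟨⟨i, s⟩, hS, rfl⟩ : ∃ r : α × Fin dr, Sum.inl r ∈ S ∧ r.1 = c.1 := by
          simpa [A] using hcA
        exact ⟨.inl (c.1, s), hS, rfl, hcM⟩
      · exact ⟨.inr c, hcS, rfl⟩
  have hdisj : Disjoint {c ∈ A ×ˢ Bᶜ | c ∉ M} S.toRight := by
    refine disjoint_left.2 fun c hc hcS => ?_
    simp only [mem_filter, mem_product, mem_compl] at hc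
    exact hc.1.2 (mem_image_of_mem _ (mem_filter.2 ⟨hcS, hc.2⟩))
  have hleft : #S.toLeft ≤ dr * #A := by
    calc #S.toLeft ≤ #(A ×ˢ (univ : Finset (Fin dr))) :=
          card_le_card fun r hr => mem_product.2 ⟨mem_image_of_mem _ hr, mem_univ _⟩
      _ = dr * #A := by simp [mul_comm]
  have hN := card_le_card hsub
  rw [card_disjSum, card_union_of_disjoint hdisj, card_product, card_univ, Fintype.card_fin,
    mul_comm] at hN
  have := hcut A B
  have := S.card_toLeft_add_card_toRight
  omega

namespace SlotAdj

variable (e : (α × Fin dr) ⊕ (α × β) ≃ (β × Fin dc) ⊕ (α × β))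

def usedCells : Finset (α × β) := {c | ∃ s, e (.inr c) = .inl (c.2, s)}

variable {e}

lemma disjoint_usedCells (he : ∀ x, SlotAdj M dr dc x (e x)) : Disjoint (usedCells e) M := by
  refine disjoint_left.2 fun c hc hcM => ?_
  obtain ⟨s, hs⟩ : ∃ s, e (.inr c) = .inl (c.2, s) := by simpa [usedCells] using hc
  simpa [SlotAdj, hs, hcM] using he (.inr c)

lemma mem_usedCells_iff (he : ∀ x, SlotAdj M dr dc x (e x)) {c : α × β} :
    c ∈ usedCells e ↔ ∃ s, e.symm (.inr c) = .inl (c.1, s) := by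
  constructor
  · intro hc
    obtain ⟨s, hs⟩ : ∃ s, e (.inr c) = .inl (c.2, s) := by simpa [usedCells] using hc
    have hadj := he (e.symm (.inr c))
    rw [Equiv.apply_symm_apply] at hadj
    rcases hx : e.symm (.inr c) with ⟨i, s'⟩ | c'
    · simp only [hx, SlotAdj] at hadj
      exact ⟨s', by rw [hadj.1]⟩
    · simp only [hx, SlotAdj] at hadj
      subst hadj
      rw [← hx, Equiv.apply_symm_apply] at hs
      exact absurd hs Sum.inr_ne_inl
  · rintro ⟨s, hs⟩
    have hadj := he (.inr c)
    simp only [usedCells, mem_filter, mem_univ, true_and]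
    rcases hy : e (.inr c) with ⟨j, s'⟩ | c'
    · simp only [hy, SlotAdj] at hadj
      exact ⟨s', by rw [hadj.1]⟩
    · simp only [hy, SlotAdj] at hadj
      subst hadj
      rw [← hy, Equiv.symm_apply_apply] at hs
      exact absurd hs Sum.inr_ne_inl

lemma card_usedCells_row (he : ∀ x, SlotAdj M dr dc x (e x)) (i : α) :
    #{j | (i, j) ∈ usedCells e} = dr := by
  set T := (univ : Finset (Fin dr)).image fun s => (.inl (i, s) : (α × Fin dr) ⊕ (α × β))
  have hsurj : ∀ y ∈ T, ∃ j, e.symm (.inr (i, j)) = y := by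
    intro y hy
    obtain ⟨s, -, rfl⟩ := mem_image.1 hy
    have hadj := he (.inl (i, s))
    rcases hy : e (.inl (i, s)) with ⟨j, s'⟩ | ⟨i', j⟩
    · simp [hy, SlotAdj] at hadj
    · simp only [hy, SlotAdj] at hadj
      obtain ⟨rfl, -⟩ := hadj
      exact ⟨j, by rw [← hy, Equiv.symm_apply_apply]⟩
  calc #{j | (i, j) ∈ usedCells e} = #{j | e.symm (.inr (i, j)) ∈ T} := by
        congr 1; ext j; simp [T, mem_usedCells_iff he, eq_comm]
    _ = #T := card_filter_apply_mem_of_injective (fun j j' h => by simpa using h) hsurj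
    _ = dr := (card_image_of_injective _ (Sum.inl_injective.comp (Prod.mk_right_injective i))).trans
      (by simp)

lemma card_usedCells_col (he : ∀ x, SlotAdj M dr dc x (e x)) (j : β) :
    #{i | (i, j) ∈ usedCells e} = dc := by
  set T := (univ : Finset (Fin dc)).image fun s => (.inl (j, s) : (β × Fin dc) ⊕ (α × β))
  have hsurj : ∀ y ∈ T, ∃ i, e (.inr (i, j)) = y := by
    intro y hy
    obtain ⟨s, -, rfl⟩ := mem_image.1 hy
    have hadj := he (e.symm (.inl (j, s)))
    rw [Equiv.apply_symm_apply] at hadj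
    rcases hx : e.symm (.inl (j, s)) with ⟨i, s'⟩ | ⟨i, j'⟩
    · simp [hx, SlotAdj] at hadj
    · simp only [hx, SlotAdj] at hadj
      obtain ⟨rfl, -⟩ := hadj
      exact ⟨i, by rw [← hx, Equiv.apply_symm_apply]⟩
  calc #{i | (i, j) ∈ usedCells e} = #{i | e (.inr (i, j)) ∈ T} := by
        congr 1; ext i; simp [T, usedCells, eq_comm]
    _ = #T := card_filter_apply_mem_of_injective (fun i i' h => by simpa using h) hsurj
    _ = dc := (card_image_of_injective _ (Sum.inl_injective.comp (Prod.mk_right_injective j))).trans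
      (by simp)

end SlotAdj

theorem exists_finset_disjoint_card_row_col_eq_of_cutCondition (M : Finset (α × β)) (dr dc : ℕ)
    (hsize : Fintype.card α * dr = Fintype.card β * dc) (hcut : CutCondition M dr dc) :
    ∃ F : Finset (α × β), Disjoint F M ∧
      (∀ i, #{j | (i, j) ∈ F} = dr) ∧ ∀ j, #{i | (i, j) ∈ F} = dc := by
  obtain ⟨f, hf, hadj⟩ := (Fintype.all_card_le_filter_rel_iff_exists_injective _).1
    (card_le_card_slotAdj_image hcut)
  have hcard : Fintype.card ((α × Fin dr) ⊕ (α × β)) = Fintype.card ((β × Fin dc) ⊕ (α × β)) := by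
    simp [hsize]
  set e := Equiv.ofBijective f ((Fintype.bijective_iff_injective_and_card f).2 ⟨hf, hcard⟩)
  exact ⟨SlotAdj.usedCells e, SlotAdj.disjoint_usedCells hadj, SlotAdj.card_usedCells_row hadj,
    SlotAdj.card_usedCells_col hadj⟩

end SlotGadget

section ProhibitedCells

/-- `hslack` is `p (dr + p - 1) ≤ dc (nc - dr)` written without subtraction. -/
lemma cut_inequality {nr nc dr dc p a b c m : ℕ} (hsize : nr * dr = nc * dc)
    (hroom : dr + p ≤ nc) (hslack : p * (dr + p) + dc * dr ≤ dc * nc + p)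
    (ha : a ≤ nr) (hbc : b + c = nc) (hma : m ≤ p * a) (hmc : m ≤ p * c) :
    dr * a + m ≤ a * c + dc * b := by
  subst hbc
  rcases le_or_gt (dr + p) c with hc | hc
  · nlinarith
  rcases le_or_gt a dc with hadc | hadc
  · nlinarith
  rcases le_or_gt c dr with hcdr | hcdr
  · have hnr : c * (dc + p) ≤ c * nr := by
      rcases Nat.eq_zero_or_pos dr with rfl | hdr
      · simp [Nat.le_zero.1 hcdr]
      · have : dr * (dc + p) ≤ dr * nr := by nlinarith [Nat.le_mul_self p]
        exact Nat.mul_le_mul_left c (Nat.le_of_mul_le_mul_left this hdr)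
    nlinarith
  · nlinarith

variable {α β : Type*} [Fintype α] [Fintype β] [DecidableEq α] [DecidableEq β]

lemma cutCondition_of_card_prohibited_le {M : Finset (α × β)} {dr dc p : ℕ}
    (hsize : Fintype.card α * dr = Fintype.card β * dc) (hroom : dr + p ≤ Fintype.card β)
    (hslack : p * (dr + p) + dc * dr ≤ dc * Fintype.card β + p)
    (hMrow : ∀ i, #{e ∈ M | e.1 = i} ≤ p) (hMcol : ∀ j, #{e ∈ M | e.2 = j} ≤ p) :
    CutCondition M dr dc := by
  intro A B
  have hsplit := card_filter_add_card_filter_not (s := A ×ˢ Bᶜ) (· ∈ M)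
  have hrowA : #{c ∈ A ×ˢ Bᶜ | c ∈ M} ≤ p * #A :=
    (card_le_card fun c hc => by simp_all).trans (card_filter_apply_mem_le_mul_card hMrow A)
  have hcolB : #{c ∈ A ×ˢ Bᶜ | c ∈ M} ≤ p * #Bᶜ :=
    (card_le_card fun c hc => by simp_all).trans (card_filter_apply_mem_le_mul_card hMcol Bᶜ)
  have := cut_inequality hsize hroom hslack (card_le_univ A) (card_add_card_compl B) hrowA hcolB
  rw [card_product] at hsplit
  omega

end ProhibitedCells

section ZeroOneMatrix

variable {α β : Type*} [Fintype α] [Fintype β] {E : Matrix α β ℝ} {dr dc : ℕ}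

lemma card_mul_eq_card_mul_of_row_col_sums (hrow : ∀ i, ∑ j, E i j = dr)
    (hcol : ∀ j, ∑ i, E i j = dc) : Fintype.card α * dr = Fintype.card β * dc := by
  have h : (Fintype.card α : ℝ) * dr = Fintype.card β * dc := by
    calc (Fintype.card α : ℝ) * dr = ∑ i, ∑ j, E i j := by simp [hrow]
      _ = ∑ j, ∑ i, E i j := sum_comm
      _ = Fintype.card β * dc := by simp [hcol]
  exact_mod_cast h

lemma sum_erase_col_inner_eq [DecidableEq β] (hE01 : ∀ i j, E i j = 0 ∨ E i j = 1)
    (hrow : ∀ i, ∑ j, E i j = dr) (hcol : ∀ j, ∑ i, E i j = dc) (j₀ : β) :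
    ∑ j ∈ univ.erase j₀, ∑ i, E i j₀ * E i j = dc * (dr - 1) := by
  have hall : ∑ j, ∑ i, E i j₀ * E i j = dc * dr := by
    rw [sum_comm]
    simp_rw [← mul_sum, hrow, ← sum_mul, hcol]
  have hself : ∑ i, E i j₀ * E i j₀ = dc := by
    rw [← hcol j₀]
    refine sum_congr rfl fun i _ => ?_
    rcases hE01 i j₀ with h | h <;> simp [h]
  rw [← add_sum_erase _ _ (mem_univ j₀), hself] at hall
  linarith

lemma slack_of_col_inner_le (hE01 : ∀ i j, E i j = 0 ∨ E i j = 1)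
    (hrow : ∀ i, ∑ j, E i j = dr) (hcol : ∀ j, ∑ i, E i j = dc) {p : ℕ} {θc : ℝ}
    (hθc : ∀ j j', j ≠ j' → ∑ i, E i j * E i j' ≤ θc) (hroom : dr + p ≤ Fintype.card β)
    (hθp : 2 * (p : ℝ) - 1 ≤ dc - θc) :
    p * (dr + p) + dc * dr ≤ dc * Fintype.card β + p := by
  classical
  rcases Nat.eq_zero_or_pos p with rfl | hp
  · simpa using Nat.mul_le_mul_left dc hroom
  obtain ⟨j₀⟩ : Nonempty β := Fintype.card_pos_iff.1 (by omega)
  have hθ : dc * ((dr : ℝ) - 1) ≤ (Fintype.card β - 1) * θc := by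
    rw [← sum_erase_col_inner_eq hE01 hrow hcol j₀]
    calc ∑ j ∈ univ.erase j₀, ∑ i, E i j₀ * E i j ≤ #(univ.erase j₀) • θc :=
          sum_le_card_nsmul _ _ _ fun j hj => hθc j₀ j (ne_of_mem_erase hj).symm
      _ = (Fintype.card β - 1) * θc := by
        rw [card_erase_of_mem (mem_univ _), card_univ, nsmul_eq_mul,
          Nat.cast_sub (by omega : 1 ≤ Fintype.card β), Nat.cast_one]
  have hroomR : (dr : ℝ) + p ≤ Fintype.card β := by exact_mod_cast hroom
  have hpR : (1 : ℝ) ≤ p := by exact_mod_cast hp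
  have hpaper : (2 * (p : ℝ) - 1) * (Fintype.card β - 1) ≤ dc * (Fintype.card β - dr) := by
    nlinarith
  have : (p : ℝ) * (dr + p) + dc * dr ≤ dc * Fintype.card β + p := by
    nlinarith
  exact_mod_cast this

end ZeroOneMatrix

/-- Lemma 7.2 of the paper: given a `(d_r,d_c)`-biregular 0-1 matrix `E` and a set `M`
of prohibited edges with at most `p` entries in each row and each column, if
`2p ≤ n_c - d_r` and `2p - 1 ≤ d_c - θ_c` (with `θ_c` the maximum inner product of two
distinct columns of `E`), then there is a `(d_r,d_c)`-biregular 0-1 matrix `E_p`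
avoiding all prohibited edges. -/
theorem exists_biregular_avoiding_prohibited (nr nc dr dc p : ℕ)
    (E : Matrix (Fin nr) (Fin nc) ℝ)
    (hE01 : ∀ i j, E i j = 0 ∨ E i j = 1)
    (hrow : ∀ i, ∑ j, E i j = dr) (hcol : ∀ j, ∑ i, E i j = dc)
    (M : Finset (Fin nr × Fin nc))
    (hMrow : ∀ i, (M.filter fun e => e.1 = i).card ≤ p)
    (hMcol : ∀ j, (M.filter fun e => e.2 = j).card ≤ p)
    (θc : ℝ) (hθc : ∀ j j' : Fin nc, j ≠ j' → ∑ i, E i j * E i j' ≤ θc)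
    (h1 : 2 * (p : ℝ) ≤ (nc : ℝ) - dr)
    (h2 : 2 * (p : ℝ) - 1 ≤ (dc : ℝ) - θc) :
    ∃ Ep : Matrix (Fin nr) (Fin nc) ℝ,
      (∀ i j, Ep i j = 0 ∨ Ep i j = 1) ∧
      (∀ i, ∑ j, Ep i j = dr) ∧ (∀ j, ∑ i, Ep i j = dc) ∧
      ∀ e ∈ M, Ep e.1 e.2 = 0 := by
  have hroom : dr + p ≤ Fintype.card (Fin nc) := by
    rw [Fintype.card_fin]
    exact_mod_cast (by linarith [p.cast_nonneg (α := ℝ)] : (dr : ℝ) + p ≤ nc)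
  have hsize := card_mul_eq_card_mul_of_row_col_sums hrow hcol
  have hslack := slack_of_col_inner_le hE01 hrow hcol hθc hroom h2
  obtain ⟨F, hFM, hFrow, hFcol⟩ :=
    exists_finset_disjoint_card_row_col_eq_of_cutCondition M dr dc hsize
      (cutCondition_of_card_prohibited_le hsize hroom hslack hMrow hMcol)
  refine ⟨fun i j => if (i, j) ∈ F then 1 else 0, fun i j => ?_, fun i => ?_, fun j => ?_,
    fun e he => if_neg (disjoint_right.1 hFM he)⟩
  · by_cases h : (i, j) ∈ F <;> simp [h]
  · simp [sum_boole, hFrow]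
  · simp [sum_boole, hFcol]
end

section
/- Let E, Δ₋, Δ₊ ∈ {0,1}^{n_r×n_c} be real 0-1 matrices such that E_p := E − Δ₋ + Δ₊ also has all entries in {0,1}, and such that both E and E_p are (d_r,d_c)-biregular (rows sum to d_r, columns sum to d_c). Suppose each of Δ₋ and Δ₊ has at most p ones in every row and in every column. Let σ₂ ≥ 0 satisfy ‖E x‖₂ ≤ σ₂ ‖x‖₂ for every x ∈ ℝ^{n_c} with ⟨x, 1_{n_c}⟩ = 0, and suppose σ₂ + 2p ≤ √(d_r−1) + √(d_c−1). Then ‖E_p x‖₂ ≤ (√(d_r−1) + √(d_c−1)) ‖x‖₂ for every x ∈ ℝ^{n_c} with ⟨x, 1_{n_c}⟩ = 0; that is, E_p is the biadjacency matrix of a (d_r,d_c)-biregular Ramanujan bigraph. -/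
/-- The Euclidean norm of a vector in `ℝⁿ`. -/
noncomputable def euclNorm {n : ℕ} (v : Fin n → ℝ) : ℝ :=
  Real.sqrt (∑ i, v i ^ 2)

/-- Theorem 7.1 of the paper: if `E` is `(d_r,d_c)`-biregular with
`‖Ex‖₂ ≤ σ₂‖x‖₂` for all `x ⊥ 1`, and `E_p = E - Δ₋ + Δ₊` is a 0-1
`(d_r,d_c)`-biregular perturbation with at most `p` ones in each row and column of
`Δ₋, Δ₊`, and `σ₂ + 2p ≤ √(d_r-1) + √(d_c-1)`, then `E_p` satisfies the Ramanujan
bound `‖E_p x‖₂ ≤ (√(d_r-1) + √(d_c-1))‖x‖₂` for all `x ⊥ 1`. -/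
theorem perturbed_biadjacency_ramanujan (nr nc dr dc p : ℕ)
    (E Δm Δp : Matrix (Fin nr) (Fin nc) ℝ)
    (hE01 : ∀ i j, E i j = 0 ∨ E i j = 1)
    (hΔm01 : ∀ i j, Δm i j = 0 ∨ Δm i j = 1)
    (hΔp01 : ∀ i j, Δp i j = 0 ∨ Δp i j = 1)
    (hEp01 : ∀ i j, (E - Δm + Δp) i j = 0 ∨ (E - Δm + Δp) i j = 1)
    (hrowE : ∀ i, ∑ j, E i j = dr) (hcolE : ∀ j, ∑ i, E i j = dc)
    (hrowEp : ∀ i, ∑ j, (E - Δm + Δp) i j = dr)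
    (hcolEp : ∀ j, ∑ i, (E - Δm + Δp) i j = dc)
    (hΔmrow : ∀ i, (Finset.univ.filter fun j => Δm i j = 1).card ≤ p)
    (hΔmcol : ∀ j, (Finset.univ.filter fun i => Δm i j = 1).card ≤ p)
    (hΔprow : ∀ i, (Finset.univ.filter fun j => Δp i j = 1).card ≤ p)
    (hΔpcol : ∀ j, (Finset.univ.filter fun i => Δp i j = 1).card ≤ p)
    (σ₂ : ℝ) (hσ₂ : 0 ≤ σ₂)
    (hEbound : ∀ x : Fin nc → ℝ, ∑ j, x j = 0 →
      euclNorm (E.mulVec x) ≤ σ₂ * euclNorm x)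
    (hgap : σ₂ + 2 * (p : ℝ) ≤ Real.sqrt ((dr : ℝ) - 1) + Real.sqrt ((dc : ℝ) - 1)) :
    ∀ x : Fin nc → ℝ, ∑ j, x j = 0 →
      euclNorm ((E - Δm + Δp).mulVec x) ≤
        (Real.sqrt ((dr : ℝ) - 1) + Real.sqrt ((dc : ℝ) - 1)) * euclNorm x := by
  intro x hx
  have hxnn : (0:ℝ) ≤ euclNorm x := Real.sqrt_nonneg _
  -- bound for a 0-1 matrix with ≤ p ones per row and column
  have key : ∀ Δ : Matrix (Fin nr) (Fin nc) ℝ,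
      (∀ i j, Δ i j = 0 ∨ Δ i j = 1) →
      (∀ i, (Finset.univ.filter fun j => Δ i j = 1).card ≤ p) →
      (∀ j, (Finset.univ.filter fun i => Δ i j = 1).card ≤ p) →
      euclNorm (Δ.mulVec x) ≤ (p:ℝ) * euclNorm x := by
    intro Δ h01 hrow hcol
    have hsq : ∀ i j, Δ i j ^ 2 = Δ i j := by
      intro i j; rcases h01 i j with h | h <;> simp [h]
    have hnn : ∀ i j, 0 ≤ Δ i j := by
      intro i j; rcases h01 i j with h | h <;> simp [h]
    have hrowsum : ∀ i, ∑ j, Δ i j ≤ (p:ℝ) := by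
      intro i
      have : ∑ j, Δ i j = ((Finset.univ.filter fun j => Δ i j = 1).card : ℝ) := by
        rw [Finset.sum_congr rfl (fun j _ =>
          show Δ i j = if Δ i j = 1 then (1:ℝ) else 0 by
            rcases h01 i j with h | h <;> simp [h]), Finset.sum_boole]
      rw [this]; exact_mod_cast hrow i
    have hcolsum : ∀ j, ∑ i, Δ i j ≤ (p:ℝ) := by
      intro j
      have : ∑ i, Δ i j = ((Finset.univ.filter fun i => Δ i j = 1).card : ℝ) := by
        rw [Finset.sum_congr rfl (fun i _ =>
          show Δ i j = if Δ i j = 1 then (1:ℝ) else 0 by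
            rcases h01 i j with h | h <;> simp [h]), Finset.sum_boole]
      rw [this]; exact_mod_cast hcol j
    have main : ∑ i, (Δ.mulVec x i) ^ 2 ≤ (p:ℝ)^2 * ∑ j, x j ^ 2 := by
      have step1 : ∀ i, (Δ.mulVec x i) ^ 2 ≤ (p:ℝ) * ∑ j, Δ i j * x j ^ 2 := by
        intro i
        have cs := Finset.sum_mul_sq_le_sq_mul_sq Finset.univ
          (fun j => Δ i j) (fun j => Δ i j * x j)
        have e1 : ∑ j, Δ i j * (Δ i j * x j) = Δ.mulVec x i := by
          simp [Matrix.mulVec, dotProduct, ← mul_assoc, ← sq, hsq]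
        have e2 : ∑ j, (Δ i j * x j) ^ 2 = ∑ j, Δ i j * x j ^ 2 := by
          refine Finset.sum_congr rfl fun j _ => ?_
          rw [mul_pow, hsq]
        rw [e1, e2] at cs
        have e3 : ∑ j, Δ i j ^ 2 = ∑ j, Δ i j :=
          Finset.sum_congr rfl fun j _ => hsq i j
        rw [e3] at cs
        refine cs.trans (mul_le_mul_of_nonneg_right (hrowsum i) ?_)
        exact Finset.sum_nonneg fun j _ => mul_nonneg (hnn i j) (sq_nonneg _)
      calc ∑ i, (Δ.mulVec x i) ^ 2
          ≤ ∑ i, (p:ℝ) * ∑ j, Δ i j * x j ^ 2 :=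
            Finset.sum_le_sum fun i _ => step1 i
        _ = (p:ℝ) * ∑ j, (∑ i, Δ i j) * x j ^ 2 := by
            rw [← Finset.mul_sum, Finset.sum_comm]
            congr 1
            exact Finset.sum_congr rfl fun j _ => by rw [Finset.sum_mul]
        _ ≤ (p:ℝ) * ∑ j, (p:ℝ) * x j ^ 2 := by
            refine mul_le_mul_of_nonneg_left (Finset.sum_le_sum fun j _ => ?_)
              (Nat.cast_nonneg p)
            exact mul_le_mul_of_nonneg_right (hcolsum j) (sq_nonneg _)
        _ = (p:ℝ)^2 * ∑ j, x j ^ 2 := by rw [← Finset.mul_sum]; ring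
    have := Real.sqrt_le_sqrt main
    calc euclNorm (Δ.mulVec x) ≤ Real.sqrt ((p:ℝ)^2 * ∑ j, x j ^ 2) := this
      _ = (p:ℝ) * euclNorm x := by
          rw [Real.sqrt_mul (sq_nonneg _), Real.sqrt_sq (Nat.cast_nonneg p)]; rfl
  -- triangle inequality via Euclidean space norm
  have tri : euclNorm ((E - Δm + Δp).mulVec x) ≤
      euclNorm (E.mulVec x) + euclNorm (Δm.mulVec x) + euclNorm (Δp.mulVec x) := by
    have normeq : ∀ v : Fin nr → ℝ,
        euclNorm v = ‖(WithLp.equiv 2 (Fin nr → ℝ)).symm v‖ := by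
      intro v
      rw [EuclideanSpace.norm_eq]
      simp [euclNorm, sq_abs]
    have hmv : (E - Δm + Δp).mulVec x =
        E.mulVec x - Δm.mulVec x + Δp.mulVec x := by
      rw [Matrix.add_mulVec, Matrix.sub_mulVec]
    rw [hmv, normeq, normeq, normeq, normeq]
    have : (WithLp.equiv 2 (Fin nr → ℝ)).symm
        (E.mulVec x - Δm.mulVec x + Δp.mulVec x) =
        (WithLp.equiv 2 (Fin nr → ℝ)).symm (E.mulVec x)
        - (WithLp.equiv 2 (Fin nr → ℝ)).symm (Δm.mulVec x)
        + (WithLp.equiv 2 (Fin nr → ℝ)).symm (Δp.mulVec x) := rfl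
    rw [this]
    calc ‖_ - _ + _‖ ≤ ‖(WithLp.equiv 2 (Fin nr → ℝ)).symm (E.mulVec x)
          - (WithLp.equiv 2 (Fin nr → ℝ)).symm (Δm.mulVec x)‖
          + ‖(WithLp.equiv 2 (Fin nr → ℝ)).symm (Δp.mulVec x)‖ := norm_add_le _ _
      _ ≤ _ := by
          gcongr
          exact norm_sub_le _ _
  calc euclNorm ((E - Δm + Δp).mulVec x)
      ≤ euclNorm (E.mulVec x) + euclNorm (Δm.mulVec x) + euclNorm (Δp.mulVec x) := tri
    _ ≤ σ₂ * euclNorm x + (p:ℝ) * euclNorm x + (p:ℝ) * euclNorm x := by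
        gcongr
        · exact hEbound x hx
        · exact key Δm hΔm01 hΔmrow hΔmcol
        · exact key Δp hΔp01 hΔprow hΔpcol
    _ = (σ₂ + 2 * (p:ℝ)) * euclNorm x := by ring
    _ ≤ (Real.sqrt ((dr : ℝ) - 1) + Real.sqrt ((dc : ℝ) - 1)) * euclNorm x :=
        mul_le_mul_of_nonneg_right hgap hxnn
end
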